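/- arXiv:2309.00332 — 4 statements merged into one kernel-verified Lean document; each statement's English description precedes it below -/
import Mathlib

section
/- Let K be a field of characteristic zero and L a Lie algebra over K with dim L > 1. If every 1/2-derivation of L is trivial (i.e., equal to multiplication by some fixed element of K), then every transposed Poisson structure on L is trivial (i.e., x·y = 0 for all x,y ∈ L). -/
open scoped Classical

noncomputable section

/-- A `1/2`-derivation of a Lie algebra `L` over `K`:
`φ ⁅a, b⁆ = (1/2) • (⁅φ a, b⁆ + ⁅a, φ b⁆)`. -/
def IsHalfDerivation (K L : Type*) [Field K] [LieRing L] [LieAlgebra K L]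
    (φ : L →ₗ[K] L) : Prop :=
  ∀ a b : L, φ ⁅a, b⁆ = (2⁻¹ : K) • (⁅φ a, b⁆ + ⁅a, φ b⁆)

/-- A transposed Poisson structure on a Lie algebra `(L, ⁅·,·⁆)`: a bilinear, commutative,
associative product satisfying `2 • z · ⁅x, y⁆ = ⁅z · x, y⁆ + ⁅x, z · y⁆`. -/
def IsTPStructure (K L : Type*) [Field K] [LieRing L] [LieAlgebra K L]
    (mul : L →ₗ[K] L →ₗ[K] L) : Prop :=
  (∀ a b : L, mul a b = mul b a) ∧
  (∀ a b c : L, mul (mul a b) c = mul a (mul b c)) ∧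
  (∀ x y z : L, (2 : K) • mul z ⁅x, y⁆ = ⁅mul z x, y⁆ + ⁅x, mul z y⁆)

theorem IsTPStructure.isHalfDerivation_mul_left {K L : Type*} [Field K] [NeZero (2 : K)]
    [LieRing L] [LieAlgebra K L] {mul : L →ₗ[K] L →ₗ[K] L} (hmul : IsTPStructure K L mul)
    (z : L) : IsHalfDerivation K L (mul z) := by
  intro a b
  rw [← hmul.2.2 a b z, smul_smul, inv_mul_cancel₀ two_ne_zero, one_smul]

/-- If `z · w = k_z w` with `k_z ≠ 0`, then by symmetry every `w = k_z⁻¹ k_w z` lies on the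
line through `z`. -/
theorem eq_zero_of_comm_of_forall_eq_smul_id {K V : Type*} [Field K] [AddCommGroup V]
    [Module K V] (hdim : 1 < Module.rank K V) (mul : V →ₗ[K] V →ₗ[K] V)
    (hcomm : ∀ a b : V, mul a b = mul b a)
    (hhom : ∀ z : V, ∃ k : K, mul z = k • LinearMap.id) (x y : V) : mul x y = 0 := by
  choose k hk using hhom
  have hmul_apply (z w : V) : mul z w = k z • w := by rw [hk]; rfl
  suffices hk_zero : k x = 0 by rw [hmul_apply, hk_zero, zero_smul]
  by_contra hkx
  refine hdim.not_ge (rank_le_one_iff.mpr ⟨x, fun w => ⟨(k x)⁻¹ * k w, ?_⟩⟩)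
  have hxw := hcomm x w
  rw [hmul_apply, hmul_apply] at hxw
  rw [mul_smul, ← hxw, smul_smul, inv_mul_cancel₀ hkx, one_smul]

/-- if `dim L > 1` and every `1/2`-derivation of `L` is trivial
(multiplication by a fixed scalar), then every transposed Poisson structure on `L`
is trivial. -/
theorem statement1 (K L : Type*) [Field K] [CharZero K] [LieRing L] [LieAlgebra K L]
    (hdim : 1 < Module.rank K L)
    (htriv : ∀ φ : L →ₗ[K] L, IsHalfDerivation K L φ →
      ∃ k : K, φ = k • (LinearMap.id : L →ₗ[K] L))
    (mul : L →ₗ[K] L →ₗ[K] L) (hmul : IsTPStructure K L mul) :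
    ∀ x y : L, mul x y = 0 :=
  eq_zero_of_comm_of_forall_eq_smul_id hdim mul hmul.1
    fun z => htriv (mul z) (hmul.isHalfDerivation_mul_left z)
end
end

section
/- Let K be a field, X a finite poset, Y ⊆ X a subset with the induced order, and φ a 1/2-derivation of the Lie algebra (I(X,K),[·,·]). Define φ_Y : I(Y,K) → I(Y,K) by φ_Y(f) = (φ(f))_Y, the I(Y,K)-component of φ(f). Then φ_Y is a 1/2-derivation of the Lie algebra (I(Y,K),[·,·]). -/
open scoped Classical

attribute [local instance] LieRing.ofAssociativeRing

noncomputable section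

/-- Extension by zero, `I(Y,K) → I(X,K)`. -/
def extY (K : Type*) {X : Type*} [Field K] [PartialOrder X]
    (Y : Set X) [DecidablePred (· ∈ Y)] :
    IncidenceAlgebra K ↥Y →ₗ[K] IncidenceAlgebra K X where
  toFun f :=
    ⟨fun x y => if hx : x ∈ Y then if hy : y ∈ Y then f ⟨x, hx⟩ ⟨y, hy⟩ else 0 else 0, by
      intro x y hxy
      show (if hx : x ∈ Y then if hy : y ∈ Y then f ⟨x, hx⟩ ⟨y, hy⟩ else 0 else 0) = 0
      split_ifs with hx hy
      · exact IncidenceAlgebra.apply_eq_zero_of_not_le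
          (fun hle => hxy (Subtype.mk_le_mk.mp hle)) f
      · rfl
      · rfl⟩
  map_add' f g := by
    refine IncidenceAlgebra.ext fun x y _ => ?_
    simp only [IncidenceAlgebra.coe_mk, IncidenceAlgebra.add_apply]
    split_ifs <;> simp [IncidenceAlgebra.add_apply]
  map_smul' c f := by
    refine IncidenceAlgebra.ext fun x y _ => ?_
    simp only [IncidenceAlgebra.coe_mk, RingHom.id_apply,
      IncidenceAlgebra.constSMul_apply]
    split_ifs <;> simp [IncidenceAlgebra.constSMul_apply]

/-- Restriction to `Y`, `I(X,K) → I(Y,K)`; composed with `extY` it yields the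
`I(Y,K)`-component `f ↦ f_Y`. -/
def resY (K : Type*) {X : Type*} [Field K] [PartialOrder X]
    (Y : Set X) [DecidablePred (· ∈ Y)] :
    IncidenceAlgebra K X →ₗ[K] IncidenceAlgebra K ↥Y where
  toFun f :=
    ⟨fun a b => f a.1 b.1, fun a b hab =>
      IncidenceAlgebra.apply_eq_zero_of_not_le
        (fun hle => hab (Subtype.coe_le_coe.mp hle)) f⟩
  map_add' f g := by
    refine IncidenceAlgebra.ext fun a b _ => ?_
    simp [IncidenceAlgebra.add_apply]
  map_smul' c f := by
    refine IncidenceAlgebra.ext fun a b _ => ?_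
    simp [IncidenceAlgebra.constSMul_apply]

/-!
Extension by zero `I(Y,K) → I(X,K)` is multiplicative, and restriction to `Y` satisfies
`(u · ext b)_Y = u_Y · b` and `(ext a · v)_Y = a · v_Y`: in each product taken at two points
of `Y`, the terms indexed by points outside `Y` vanish, so the sum over the interval of `X`
is the sum over the interval of the induced order on `Y` (`Y` need not be convex).
Hence `φ_Y ⁅a, b⁆ = (φ ⁅ext a, ext b⁆)_Y`, and the `1/2`-derivation identity for `φ`
restricts to the one for `φ_Y`.
-/

namespace IncidenceAlgebra

variable {K X : Type*} [Field K] [PartialOrder X] (Y : Set X) [DecidablePred (· ∈ Y)]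

lemma extY_apply (f : IncidenceAlgebra K Y) (x y : X) :
    extY K Y f x y =
      if hx : x ∈ Y then if hy : y ∈ Y then f ⟨x, hx⟩ ⟨y, hy⟩ else 0 else 0 := rfl

@[simp]
lemma resY_apply (f : IncidenceAlgebra K X) (a b : Y) : resY K Y f a b = f a b := rfl

@[simp]
lemma extY_apply_coe (f : IncidenceAlgebra K Y) (a b : Y) : extY K Y f a b = f a b := by
  simp [extY_apply]

lemma extY_apply_of_notMem_left (f : IncidenceAlgebra K Y) {x : X} (hx : x ∉ Y) (y : X) :
    extY K Y f x y = 0 := by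
  simp [extY_apply, hx]

lemma extY_apply_of_notMem_right (f : IncidenceAlgebra K Y) (x : X) {y : X} (hy : y ∉ Y) :
    extY K Y f x y = 0 := by
  simp [extY_apply, hy]

variable [LocallyFiniteOrder X]

lemma mul_apply_eq_sum_Icc_subtype (f g : IncidenceAlgebra K X) (a b : Y)
    (h : ∀ z, z ∉ Y → f a z * g z b = 0) :
    (f * g) a b = ∑ z ∈ Finset.Icc a b, f a z * g z b := by
  rw [mul_apply, Finset.subtype_Icc_eq,
    Finset.sum_subtype_eq_sum_filter (f := fun z => f a z * g z b),
    Finset.sum_filter_of_ne fun z _ hz => not_not.mp (mt (h z) hz)]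

lemma resY_mul_extY (u : IncidenceAlgebra K X) (b : IncidenceAlgebra K Y) :
    resY K Y (u * extY K Y b) = resY K Y u * b := by
  ext x y -
  rw [resY_apply, mul_apply_eq_sum_Icc_subtype Y _ _ x y
    fun z hz => by rw [extY_apply_of_notMem_left Y b hz, mul_zero]]
  simp

lemma resY_extY_mul (a : IncidenceAlgebra K Y) (v : IncidenceAlgebra K X) :
    resY K Y (extY K Y a * v) = a * resY K Y v := by
  ext x y -
  rw [resY_apply, mul_apply_eq_sum_Icc_subtype Y _ _ x y
    fun z hz => by rw [extY_apply_of_notMem_right Y a _ hz, zero_mul]]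
  simp

lemma extY_mul (a b : IncidenceAlgebra K Y) :
    extY K Y (a * b) = extY K Y a * extY K Y b := by
  ext x y -
  by_cases hx : x ∈ Y
  · by_cases hy : y ∈ Y
    · lift x to Y using hx
      lift y to Y using hy
      simpa using (congrArg (· x y) (resY_extY_mul Y a (extY K Y b))).symm
    · simp [extY_apply_of_notMem_right Y _ _ hy]
  · simp [extY_apply_of_notMem_left Y _ hx]

variable [DecidableEq X]

lemma resY_lie_extY (u : IncidenceAlgebra K X) (b : IncidenceAlgebra K Y) :
    resY K Y ⁅u, extY K Y b⁆ = ⁅resY K Y u, b⁆ := by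
  rw [Ring.lie_def, Ring.lie_def, map_sub, resY_mul_extY, resY_extY_mul]

lemma resY_extY_lie (a : IncidenceAlgebra K Y) (v : IncidenceAlgebra K X) :
    resY K Y ⁅extY K Y a, v⁆ = ⁅a, resY K Y v⁆ := by
  rw [Ring.lie_def, Ring.lie_def, map_sub, resY_extY_mul, resY_mul_extY]

lemma extY_lie (a b : IncidenceAlgebra K Y) :
    extY K Y ⁅a, b⁆ = ⁅extY K Y a, extY K Y b⁆ := by
  rw [Ring.lie_def, Ring.lie_def, map_sub, extY_mul, extY_mul]

end IncidenceAlgebra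

theorem statement5_general (K X : Type*) [Field K] [PartialOrder X]
    [LocallyFiniteOrder X] [DecidableEq X] (Y : Set X) [DecidablePred (· ∈ Y)]
    (φ : IncidenceAlgebra K X →ₗ[K] IncidenceAlgebra K X)
    (hφ : IsHalfDerivation K (IncidenceAlgebra K X) φ) :
    IsHalfDerivation K (IncidenceAlgebra K ↥Y) ((resY K Y).comp (φ.comp (extY K Y))) := by
  intro a b
  simp only [LinearMap.comp_apply]
  rw [IncidenceAlgebra.extY_lie, hφ, map_smul, map_add, IncidenceAlgebra.resY_lie_extY,
    IncidenceAlgebra.resY_extY_lie]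

/-- if `φ` is a `1/2`-derivation of the Lie algebra `I(X,K)`, then
`φ_Y : f ↦ (φ f)_Y` is a `1/2`-derivation of the Lie algebra `I(Y,K)`. -/
theorem statement5 (K X : Type*) [Field K] [PartialOrder X] [Fintype X]
    [LocallyFiniteOrder X] [DecidableEq X] (Y : Set X) [DecidablePred (· ∈ Y)]
    (φ : IncidenceAlgebra K X →ₗ[K] IncidenceAlgebra K X)
    (hφ : IsHalfDerivation K (IncidenceAlgebra K X) φ) :
    IsHalfDerivation K (IncidenceAlgebra K ↥Y) ((resY K Y).comp (φ.comp (extY K Y))) :=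
  statement5_general K X Y φ hφ
end
end

section
/- Let K be a field of characteristic zero, X a finite connected poset, and φ ∈ Δ(I(X,K)). Then for all x < y in X: [φ(e_x), e_{xy}] = (φ(e_x)(x,x) − φ(e_x)(y,y)) e_{xy} and [e_{xy}, φ(e_y)] = (φ(e_y)(y,y) − φ(e_y)(x,x)) e_{xy}. -/
open scoped Classical

noncomputable section

attribute [local instance 100] LieRing.ofAssociativeRing

/-- The standard basis element `e_{xy}` (for `x ≤ y`) of the incidence algebra. -/
def eI (K : Type*) {X : Type*} [Field K] [PartialOrder X] [DecidableEq X]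
    (x y : X) (h : x ≤ y) : IncidenceAlgebra K X :=
  ⟨fun u v => if x = u ∧ y = v then (1 : K) else 0, by
    intro u v huv
    show (if x = u ∧ y = v then (1 : K) else 0) = 0
    rw [if_neg]; rintro ⟨rfl, rfl⟩; exact huv h⟩

/-- A walk `u 0, u 1, …, u m` in a poset: consecutive vertices are comparable and
cover one another (`l(x,y) = 1`). -/
def IsWalkOn {X : Type*} [PartialOrder X] (u : ℕ → X) (m : ℕ) : Prop :=
  ∀ i < m, u i ⋖ u (i + 1) ∨ u (i + 1) ⋖ u i

/-- A poset is connected if any two of its elements are joined by a walk. -/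
def ConnectedPoset (X : Type*) [PartialOrder X] : Prop :=
  ∀ x y : X, ∃ (u : ℕ → X) (m : ℕ), IsWalkOn u m ∧ u 0 = x ∧ u m = y

/-!
The `(a,b)`-entry of `⁅f, e_{xy}⁆` is `[y = b] f(a,x) - [x = a] f(y,b)`, so the claim says that
`φ(e_x)` vanishes at `(a,x)` for `a < x` and at `(y,b)` for `y < b`, and likewise for `φ(e_y)`.
Applying `φ` to the commuting pairs `e_x, e_z` and `e_u, e_{xy}` (`u ≠ x, y`) shows that
`φ(e_x)(a,b) = 0` whenever `x, a, b` are distinct, and that `φ(e_{xy})(u,y) = φ(e_x)(u,x)` for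
`u < x < y`. On the other hand the defining identity applied to `⁅e_x, e_{xy}⁆ = e_{xy}` gives
`φ(e_{xy})(u,y) = 2⁻¹ φ(e_x)(u,x)`, so both vanish. The entries `φ(e_y)(y,v)`, `v > y`, are
handled in the same way through `⁅e_{xy}, e_y⁆ = e_{xy}`.
-/

namespace IsHalfDerivation

variable {K L : Type*} [Field K] [CharZero K] [LieRing L] [LieAlgebra K L] {φ : L →ₗ[K] L}

theorem lie_add_lie_eq_zero (hφ : IsHalfDerivation K L φ) {a b : L} (hab : ⁅a, b⁆ = 0) :
    ⁅φ a, b⁆ + ⁅a, φ b⁆ = 0 := by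
  have h := hφ a b
  rw [hab, map_zero, eq_comm, smul_eq_zero] at h
  exact h.resolve_left (by norm_num)

end IsHalfDerivation

section eI

variable {K X : Type*} [Field K] [PartialOrder X] [DecidableEq X]

open IncidenceAlgebra

theorem eI_apply (x y : X) (h : x ≤ y) (a b : X) :
    eI K x y h a b = if x = a ∧ y = b then 1 else 0 := rfl

theorem eI_self_apply_of_ne (u : X) {a b : X} (hab : a ≠ b) : eI K u u le_rfl a b = 0 :=
  if_neg fun h => hab (h.1.symm.trans h.2)

variable [LocallyFiniteOrder X]

theorem mul_eI_apply (f : IncidenceAlgebra K X) {x y : X} (h : x ≤ y) (a b : X) :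
    (f * eI K x y h) a b = if y = b then f a x else 0 := by
  rw [mul_apply]
  split_ifs with hyb
  · subst hyb
    simp only [eI_apply, and_true, mul_ite, mul_one, mul_zero, Finset.sum_ite_eq, Finset.mem_Icc]
    split_ifs with hx
    · rfl
    · exact (apply_eq_zero_of_not_le (fun hax => hx ⟨hax, h⟩) f).symm
  · simp [eI_apply, hyb]

theorem eI_mul_apply (f : IncidenceAlgebra K X) {x y : X} (h : x ≤ y) (a b : X) :
    (eI K x y h * f) a b = if x = a then f y b else 0 := by
  rw [mul_apply]
  split_ifs with hxa
  · subst hxa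
    simp only [eI_apply, true_and, ite_mul, one_mul, zero_mul, Finset.sum_ite_eq, Finset.mem_Icc]
    split_ifs with hy
    · rfl
    · exact (apply_eq_zero_of_not_le (fun hyb => hy ⟨h, hyb⟩) f).symm
  · simp [eI_apply, hxa]

theorem lie_eI_apply (f : IncidenceAlgebra K X) {x y : X} (h : x ≤ y) (a b : X) :
    ⁅f, eI K x y h⁆ a b = (if y = b then f a x else 0) - if x = a then f y b else 0 := by
  rw [Ring.lie_def, IncidenceAlgebra.sub_apply, mul_eI_apply, eI_mul_apply]

theorem eI_lie_apply (f : IncidenceAlgebra K X) {x y : X} (h : x ≤ y) (a b : X) :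
    ⁅eI K x y h, f⁆ a b = (if x = a then f y b else 0) - if y = b then f a x else 0 := by
  rw [Ring.lie_def, IncidenceAlgebra.sub_apply, mul_eI_apply, eI_mul_apply]

theorem lie_eI_eq_smul (f : IncidenceAlgebra K X) {x y : X} (h : x ≤ y)
    (hleft : ∀ a < x, f a x = 0) (hright : ∀ b, y < b → f y b = 0) :
    ⁅f, eI K x y h⁆ = (f x x - f y y) • eI K x y h := by
  have hcol : ∀ a, a ≠ x → f a x = 0 := fun a hax =>
    (em (a ≤ x)).elim (fun hle => hleft a (hle.lt_of_ne hax)) (apply_eq_zero_of_not_le · f)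
  have hrow : ∀ b, y ≠ b → f y b = 0 := fun b hyb =>
    (em (y ≤ b)).elim (fun hle => hright b (hle.lt_of_ne hyb)) (apply_eq_zero_of_not_le · f)
  ext a b -
  rw [lie_eI_apply, constSMul_apply, eI_apply, smul_eq_mul]
  by_cases hxa : x = a <;> by_cases hyb : y = b
  · subst hxa hyb; simp
  · simp [hxa, hyb, hrow b hyb]
  · simp [hxa, hyb, hcol a (Ne.symm hxa)]
  · simp [hxa, hyb]

theorem lie_eI_self_eI (u : X) {x y : X} (h : x ≤ y) :
    ⁅eI K u u le_rfl, eI K x y h⁆ =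
      (eI K u u le_rfl x x - eI K u u le_rfl y y) • eI K x y h :=
  lie_eI_eq_smul _ h (fun _ hax => eI_self_apply_of_ne u hax.ne)
    fun _ hyb => eI_self_apply_of_ne u hyb.ne

theorem lie_eI_self_eI_of_ne {u x y : X} (h : x ≤ y) (hux : u ≠ x) (huy : u ≠ y) :
    ⁅eI K u u le_rfl, eI K x y h⁆ = 0 := by
  simp [lie_eI_self_eI, eI_apply, hux, huy]

theorem lie_eI_self_left_eI {x y : X} (h : x ≤ y) (hxy : x ≠ y) :
    ⁅eI K x x le_rfl, eI K x y h⁆ = eI K x y h := by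
  simp [lie_eI_self_eI, eI_apply, hxy]

theorem lie_eI_eI_self_right {x y : X} (h : x ≤ y) (hxy : x ≠ y) :
    ⁅eI K x y h, eI K y y le_rfl⁆ = eI K x y h := by
  rw [← lie_skew]
  simp [lie_eI_self_eI, eI_apply, hxy.symm]

end eI

namespace IsHalfDerivation

variable {K X : Type*} [Field K] [CharZero K] [PartialOrder X] [LocallyFiniteOrder X]
  [DecidableEq X] {φ : IncidenceAlgebra K X →ₗ[K] IncidenceAlgebra K X}

theorem map_eI_self_lie_add_lie_map_eI_self_apply
    (hφ : IsHalfDerivation K (IncidenceAlgebra K X) φ) {x z : X} (hxz : x ≠ z) (a b : X) :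
    ((if z = b then φ (eI K x x le_rfl) a z else 0) -
        if z = a then φ (eI K x x le_rfl) z b else 0) +
      ((if x = a then φ (eI K z z le_rfl) x b else 0) -
        if x = b then φ (eI K z z le_rfl) a x else 0) = 0 := by
  have h := congrArg (· a b) (hφ.lie_add_lie_eq_zero (lie_eI_self_eI_of_ne le_rfl hxz hxz))
  simpa only [IncidenceAlgebra.add_apply, lie_eI_apply, eI_lie_apply,
    IncidenceAlgebra.zero_apply] using h

theorem map_eI_self_apply_of_ne (hφ : IsHalfDerivation K (IncidenceAlgebra K X) φ)
    {x a b : X} (hxa : x ≠ a) (hxb : x ≠ b) (hab : a ≠ b) : φ (eI K x x le_rfl) a b = 0 := by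
  simpa [hab, hxa, hxb] using hφ.map_eI_self_lie_add_lie_map_eI_self_apply hxa a b

theorem map_eI_self_apply_add_map_eI_self_apply
    (hφ : IsHalfDerivation K (IncidenceAlgebra K X) φ) {a b : X} (hab : a ≠ b) :
    φ (eI K a a le_rfl) a b + φ (eI K b b le_rfl) a b = 0 := by
  simpa [hab, hab.symm] using hφ.map_eI_self_lie_add_lie_map_eI_self_apply hab a b

theorem map_eI_self_apply_of_lt_self (hφ : IsHalfDerivation K (IncidenceAlgebra K X) φ)
    {u x y : X} (hux : u < x) (hxy : x < y) : φ (eI K x x le_rfl) u x = 0 := by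
  have huy : u ≠ y := (hux.trans hxy).ne
  have h₁ := hφ.map_eI_self_apply_add_map_eI_self_apply hux.ne
  have h₂ : φ (eI K u u le_rfl) u x + φ (eI K x y hxy.le) u y = 0 := by
    simpa [lie_eI_apply, eI_lie_apply, hux.ne', huy] using
      congrArg (· u y) (hφ.lie_add_lie_eq_zero (lie_eI_self_eI_of_ne hxy.le hux.ne huy))
  have h₃ : φ (eI K x y hxy.le) u y = 2⁻¹ * φ (eI K x x le_rfl) u x := by
    simpa [lie_eI_self_left_eI hxy.le hxy.ne, lie_eI_apply, eI_lie_apply, hux.ne', hxy.ne] using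
      congrArg (· u y) (hφ (eI K x x le_rfl) (eI K x y hxy.le))
  linear_combination 2 * h₁ - 2 * h₂ + 2 * h₃

theorem map_eI_self_apply_self_of_lt (hφ : IsHalfDerivation K (IncidenceAlgebra K X) φ)
    {x y v : X} (hxy : x < y) (hyv : y < v) : φ (eI K y y le_rfl) y v = 0 := by
  have hxv : x ≠ v := (hxy.trans hyv).ne
  have h₁ := hφ.map_eI_self_apply_add_map_eI_self_apply hyv.ne
  have h₂ : φ (eI K v v le_rfl) y v + φ (eI K x y hxy.le) x v = 0 := by
    have hcomm : ⁅eI K x y hxy.le, eI K v v le_rfl⁆ = 0 := by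
      rw [← lie_skew, lie_eI_self_eI_of_ne hxy.le hxv.symm hyv.ne', neg_zero]
    simpa [lie_eI_apply, eI_lie_apply, hyv.ne, hxv.symm, add_comm] using
      congrArg (· x v) (hφ.lie_add_lie_eq_zero hcomm)
  have h₃ : φ (eI K x y hxy.le) x v = 2⁻¹ * φ (eI K y y le_rfl) y v := by
    simpa [lie_eI_eI_self_right hxy.le hxy.ne, lie_eI_apply, eI_lie_apply, hyv.ne, hxy.ne'] using
      congrArg (· x v) (hφ (eI K x y hxy.le) (eI K y y le_rfl))
  linear_combination 2 * h₁ - 2 * h₂ + 2 * h₃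

end IsHalfDerivation

theorem statement6_general (K X : Type*) [Field K] [CharZero K] [PartialOrder X]
    [LocallyFiniteOrder X] [DecidableEq X]
    (φ : IncidenceAlgebra K X →ₗ[K] IncidenceAlgebra K X)
    (hφ : IsHalfDerivation K (IncidenceAlgebra K X) φ)
    (x y : X) (hxy : x < y) :
    ⁅φ (eI K x x le_rfl), eI K x y hxy.le⁆ =
      (φ (eI K x x le_rfl) x x - φ (eI K x x le_rfl) y y) • eI K x y hxy.le ∧
    ⁅eI K x y hxy.le, φ (eI K y y le_rfl)⁆ =
      (φ (eI K y y le_rfl) y y - φ (eI K y y le_rfl) x x) • eI K x y hxy.le := by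
  constructor
  · exact lie_eI_eq_smul _ hxy.le (fun a hax => hφ.map_eI_self_apply_of_lt_self hax hxy)
      fun b hyb => hφ.map_eI_self_apply_of_ne hxy.ne (hxy.trans hyb).ne hyb.ne
  · rw [← lie_skew, lie_eI_eq_smul _ hxy.le
      (fun a hax => hφ.map_eI_self_apply_of_ne (hax.trans hxy).ne' hxy.ne' hax.ne)
      fun b hyb => hφ.map_eI_self_apply_self_of_lt hxy hyb, ← neg_smul, neg_sub]

/-- for a `1/2`-derivation `φ` of `I(X,K)` over a finite connected poset
and `x < y`:
`⁅φ e_x, e_{xy}⁆ = (φ(e_x)(x,x) − φ(e_x)(y,y)) e_{xy}` and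
`⁅e_{xy}, φ e_y⁆ = (φ(e_y)(y,y) − φ(e_y)(x,x)) e_{xy}`. -/
theorem statement6 (K X : Type*) [Field K] [CharZero K] [PartialOrder X] [Fintype X]
    [LocallyFiniteOrder X] [DecidableEq X] (hconn : ConnectedPoset X)
    (φ : IncidenceAlgebra K X →ₗ[K] IncidenceAlgebra K X)
    (hφ : IsHalfDerivation K (IncidenceAlgebra K X) φ)
    (x y : X) (hxy : x < y) :
    ⁅φ (eI K x x le_rfl), eI K x y hxy.le⁆ =
      (φ (eI K x x le_rfl) x x - φ (eI K x x le_rfl) y y) • eI K x y hxy.le ∧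
    ⁅eI K x y hxy.le, φ (eI K y y le_rfl)⁆ =
      (φ (eI K y y le_rfl) y y - φ (eI K y y le_rfl) x x) • eI K x y hxy.le :=
  statement6_general K X φ hφ x y hxy
end
end

section
/- Let K be a field of characteristic zero and X a finite connected poset. Each φ ∈ Δ(I(X,K)) can be written as φ = ad_c + φ̃ for a unique c ∈ Z([I(X,K),I(X,K)]) and a unique diagonality-preserving φ̃ ∈ Δ(I(X,K)). -/
/-!
Applying a `1/2`-derivation `φ` to `[e_x, e_y] = 0` shows that the off-diagonal entries of `φ(e_x)`
lie in row and column `x`, with `φ(e_x)(x,q) = -φ(e_q)(x,q)`. Applying it to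
`[e_a, e_{ab}] = e_{ab} = [e_{ab}, e_b]`, with `(a,b) = (q,r)` for `p < q < r` or `(a,b) = (o,p)`
for `o < p < q`, kills `φ(e_q)(p,q)` unless `p` is minimal and `q` maximal. Hence
`c(u,v) := φ(e_v)(u,v)` (`u ≠ v`) is supported on `Min(X) × Max(X)`, so it commutes with every
element of zero diagonal, i.e. with `[I, I]`. Then `ad_c` is a `1/2`-derivation and `φ - ad_c` maps
every `e_x`, hence every diagonal element, to a diagonal one. Conversely the `(u,v)` entry of
`φ(e_v) = [d, e_v] + ψ(e_v)` forces `d = c`.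
-/

open scoped Classical

attribute [local instance 100] LieRing.ofAssociativeRing

noncomputable section

/-- The derived subalgebra `[L, L]` (the span of all brackets), as a `K`-submodule. -/
def derivedSpan (K L : Type*) [Field K] [LieRing L] [LieAlgebra K L] : Submodule K L :=
  Submodule.span K {z : L | ∃ a b : L, z = ⁅a, b⁆}

/-- Diagonal elements of the incidence algebra (the subspace `D(X,K)`). -/
def IsDiagI {K X : Type*} [Zero K] [LE X] (f : IncidenceAlgebra K X) : Prop :=
  ∀ x y : X, x ≠ y → f x y = 0

section HalfDerivation

variable {K L : Type*} [Field K] [LieRing L] [LieAlgebra K L]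

theorem IsHalfDerivation.sub {φ ψ : L →ₗ[K] L} (hφ : IsHalfDerivation K L φ)
    (hψ : IsHalfDerivation K L ψ) : IsHalfDerivation K L (φ - ψ) := by
  intro a b
  simp only [LinearMap.sub_apply, hφ a b, hψ a b, sub_lie, lie_sub, ← smul_sub]
  abel_nf

theorem isHalfDerivation_ad {c : L} (hc : ∀ f ∈ derivedSpan K L, ⁅c, f⁆ = 0) :
    IsHalfDerivation K L (LieAlgebra.ad K L c) := by
  intro a b
  have hab : ⁅c, ⁅a, b⁆⁆ = 0 := hc _ (Submodule.subset_span ⟨a, b, rfl⟩)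
  simp only [LieAlgebra.ad_apply, hab, ← leibniz_lie, smul_zero]

theorem IsHalfDerivation.lie_add_lie_eq_zero_s11 [NeZero (2 : K)] {φ : L →ₗ[K] L}
    (hφ : IsHalfDerivation K L φ) {a b : L} (hab : ⁅a, b⁆ = 0) :
    ⁅φ a, b⁆ + ⁅a, φ b⁆ = 0 := by
  have h := hφ a b
  rw [hab, map_zero, eq_comm, smul_eq_zero] at h
  exact h.resolve_left (inv_ne_zero two_ne_zero)

end HalfDerivation

theorem eq_zero_of_eq_inv_two_mul {K : Type*} [Field K] [NeZero (2 : K)] {a : K}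
    (h : a = 2⁻¹ * a) : a = 0 := by
  have : (2 : K) ≠ 0 := two_ne_zero
  field_simp at h
  linear_combination h

namespace IncidenceAlgebra

theorem sum_apply {K X ι : Type*} [AddCommMonoid K] [LE X] (s : Finset ι)
    (g : ι → IncidenceAlgebra K X) (u v : X) : (∑ i ∈ s, g i) u v = ∑ i ∈ s, g i u v :=
  map_sum (⟨⟨fun f => f u v, rfl⟩, fun _ _ => rfl⟩ : IncidenceAlgebra K X →+ K) g s

variable {K X : Type*} [Field K] [PartialOrder X] [DecidableEq X]

theorem eI_apply (x y : X) (h : x ≤ y) (u v : X) :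
    eI K x y h u v = if x = u ∧ y = v then 1 else 0 := rfl

abbrev eDiag (K : Type*) [Field K] (x : X) : IncidenceAlgebra K X := eI K x x le_rfl

theorem isDiagI_eDiag (x : X) : IsDiagI (eDiag K x) := by
  intro u v huv
  simp only [eI_apply, ite_eq_right_iff, one_ne_zero, imp_false, not_and]
  rintro rfl rfl
  exact huv rfl

def centralPart (φ : IncidenceAlgebra K X →ₗ[K] IncidenceAlgebra K X) : IncidenceAlgebra K X :=
  ⟨fun u v => if u = v then 0 else φ (eDiag K v) u v, fun u v huv => by
    simp only [apply_eq_zero_of_not_le huv, ite_self]⟩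

theorem centralPart_apply (φ : IncidenceAlgebra K X →ₗ[K] IncidenceAlgebra K X) (u v : X) :
    centralPart φ u v = if u = v then 0 else φ (eDiag K v) u v := rfl

variable [LocallyFiniteOrder X]

theorem mul_eI_apply (f : IncidenceAlgebra K X) (x y : X) (h : x ≤ y) (u v : X) :
    (f * eI K x y h) u v = if y = v then f u x else 0 := by
  rw [mul_apply, Finset.sum_eq_single x]
  · simp [eI_apply]
  · intro z _ hzx
    simp [eI_apply, Ne.symm hzx]
  · intro hx
    rw [eI_apply]
    split_ifs with hxv
    · rw [apply_eq_zero_of_not_le (fun hux => hx (Finset.mem_Icc.2 ⟨hux, hxv.2 ▸ h⟩)), zero_mul]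
    · rw [mul_zero]

theorem eI_mul_apply (f : IncidenceAlgebra K X) (x y : X) (h : x ≤ y) (u v : X) :
    (eI K x y h * f) u v = if x = u then f y v else 0 := by
  rw [mul_apply, Finset.sum_eq_single y]
  · simp [eI_apply]
  · intro z _ hzy
    simp [eI_apply, Ne.symm hzy]
  · intro hy
    rw [eI_apply]
    split_ifs with hxu
    · rw [apply_eq_zero_of_not_le (fun hyv => hy (Finset.mem_Icc.2 ⟨hxu.1 ▸ h, hyv⟩)), mul_zero]
    · rw [zero_mul]

theorem lie_eI_apply (f : IncidenceAlgebra K X) (x y : X) (h : x ≤ y) (u v : X) :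
    ⁅f, eI K x y h⁆ u v = (if y = v then f u x else 0) - (if x = u then f y v else 0) := by
  rw [Ring.lie_def, sub_apply, mul_eI_apply, eI_mul_apply]

theorem eI_lie_apply (f : IncidenceAlgebra K X) (x y : X) (h : x ≤ y) (u v : X) :
    ⁅eI K x y h, f⁆ u v = (if x = u then f y v else 0) - (if y = v then f u x else 0) := by
  rw [Ring.lie_def, sub_apply, mul_eI_apply, eI_mul_apply]

theorem lie_eDiag_apply (f : IncidenceAlgebra K X) (x u v : X) :
    ⁅f, eDiag K x⁆ u v = (if x = v then f u x else 0) - (if x = u then f x v else 0) :=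
  lie_eI_apply f x x le_rfl u v

theorem eDiag_lie_apply (f : IncidenceAlgebra K X) (x u v : X) :
    ⁅eDiag K x, f⁆ u v = (if x = u then f x v else 0) - (if x = v then f u x else 0) :=
  eI_lie_apply f x x le_rfl u v

theorem lie_eDiag_eDiag (x y : X) : ⁅eDiag K x, eDiag K y⁆ = 0 := by
  ext u v
  simp only [eDiag_lie_apply, eI_apply, zero_apply]
  grind

theorem eDiag_lie_eI {p q : X} (h : p ≤ q) (hpq : p ≠ q) :
    ⁅eDiag K p, eI K p q h⁆ = eI K p q h := by
  ext u v
  simp only [eDiag_lie_apply, eI_apply]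
  grind

theorem eI_lie_eDiag {p q : X} (h : p ≤ q) (hpq : p ≠ q) :
    ⁅eI K p q h, eDiag K q⁆ = eI K p q h := by
  ext u v
  simp only [lie_eDiag_apply, eI_apply]
  grind

theorem lie_apply_self (a b : IncidenceAlgebra K X) (x : X) : ⁅a, b⁆ x x = 0 := by
  simp [Ring.lie_def, sub_apply, mul_comm]

theorem eq_sum_lie_eDiag_mul [Fintype X] {f : IncidenceAlgebra K X} (hf : ∀ x, f x x = 0) :
    f = ∑ p, ⁅eDiag K p, eDiag K p * f⁆ := by
  ext u v
  simp only [sum_apply, eDiag_lie_apply, eI_mul_apply]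
  simp [hf]

theorem mem_derivedSpan_iff [Fintype X] {f : IncidenceAlgebra K X} :
    f ∈ derivedSpan K (IncidenceAlgebra K X) ↔ ∀ x, f x x = 0 := by
  constructor
  · intro hf x
    induction hf using Submodule.span_induction with
    | mem z hz => obtain ⟨a, b, rfl⟩ := hz; exact lie_apply_self a b x
    | zero => rfl
    | add a b _ _ ha hb => rw [add_apply, ha, hb, add_zero]
    | smul t a _ ha => rw [constSMul_apply, ha, smul_zero]
  · intro hf
    rw [eq_sum_lie_eDiag_mul hf]
    exact Submodule.sum_mem _ fun p _ => Submodule.subset_span ⟨_, _, rfl⟩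

theorem eq_sum_smul_eDiag [Fintype X] {f : IncidenceAlgebra K X} (hf : IsDiagI f) :
    f = ∑ x, f x x • eDiag K x := by
  ext u v
  rw [sum_apply, Finset.sum_eq_single u]
  · by_cases huv : u = v
    · simp [eI_apply, huv]
    · simp [eI_apply, huv, hf u v huv]
  · intro x _ hxu
    simp [eI_apply, hxu]
  · simp

theorem lie_eq_zero_of_isMin_isMax {c f : IncidenceAlgebra K X}
    (hc : ∀ u v, c u v ≠ 0 → IsMin u ∧ IsMax v) (hf : ∀ x, f x x = 0) : ⁅c, f⁆ = 0 := by
  ext u v huv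
  have hcf : ∀ z ∈ Finset.Icc u v, c u z * f z v = 0 := by
    intro z hz
    by_cases hcz : c u z = 0
    · rw [hcz, zero_mul]
    · rw [(hc u z hcz).2.eq_of_le (Finset.mem_Icc.1 hz).2, hf, mul_zero]
  have hfc : ∀ z ∈ Finset.Icc u v, f u z * c z v = 0 := by
    intro z hz
    by_cases hcz : c z v = 0
    · rw [hcz, mul_zero]
    · rw [← (hc z v hcz).1.eq_of_ge (Finset.mem_Icc.1 hz).1, hf, zero_mul]
  rw [Ring.lie_def, sub_apply, mul_apply, mul_apply, Finset.sum_eq_zero hcf,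
    Finset.sum_eq_zero hfc, sub_zero, zero_apply]

theorem centralPart_mem_derivedSpan [Fintype X]
    (φ : IncidenceAlgebra K X →ₗ[K] IncidenceAlgebra K X) :
    centralPart φ ∈ derivedSpan K (IncidenceAlgebra K X) :=
  mem_derivedSpan_iff.2 fun _ => if_pos rfl

theorem eq_centralPart [Fintype X] {φ ψ : IncidenceAlgebra K X →ₗ[K] IncidenceAlgebra K X}
    {d : IncidenceAlgebra K X} (hd : d ∈ derivedSpan K (IncidenceAlgebra K X))
    (hψ : ∀ f, IsDiagI f → IsDiagI (ψ f)) (hφ : ∀ a, φ a = ⁅d, a⁆ + ψ a) :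
    d = centralPart φ := by
  ext u v
  rw [centralPart_apply]
  split_ifs with huv
  · rw [huv, mem_derivedSpan_iff.1 hd]
  · rw [hφ, add_apply, lie_eDiag_apply, hψ _ (isDiagI_eDiag v) u v huv]
    simp [Ne.symm huv]

variable [NeZero (2 : K)] {φ : IncidenceAlgebra K X →ₗ[K] IncidenceAlgebra K X}

theorem apply_eDiag_apply_of_ne (hφ : IsHalfDerivation K (IncidenceAlgebra K X) φ)
    {x p q : X} (hxp : x ≠ p) (hxq : x ≠ q) (hpq : p ≠ q) : φ (eDiag K x) p q = 0 := by
  have h := congr($(hφ.lie_add_lie_eq_zero_s11 (lie_eDiag_eDiag (K := K) x q)) p q)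
  simpa [lie_eDiag_apply, eDiag_lie_apply, hxp, hxq, hpq.symm] using h

theorem apply_eDiag_apply_left (hφ : IsHalfDerivation K (IncidenceAlgebra K X) φ)
    {x q : X} (hxq : x ≠ q) : φ (eDiag K x) x q = -φ (eDiag K q) x q := by
  have h := congr($(hφ.lie_add_lie_eq_zero_s11 (lie_eDiag_eDiag (K := K) x q)) x q)
  simp only [add_apply, lie_eDiag_apply, eDiag_lie_apply, zero_apply, hxq, hxq.symm,
    ↓reduceIte] at h
  linear_combination h

theorem apply_eDiag_apply_eq_zero_of_not_isMax
    (hφ : IsHalfDerivation K (IncidenceAlgebra K X) φ) {p q : X} (hpq : p < q)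
    (hq : ¬IsMax q) : φ (eDiag K q) p q = 0 := by
  obtain ⟨r, hqr⟩ := not_isMax_iff.1 hq
  have hpr := hpq.trans hqr
  have hqr_entry : φ (eI K q r hqr.le) p r = 0 := by
    have h := congr($(hφ (eI K q r hqr.le) (eDiag K r)) p r)
    rw [eI_lie_eDiag hqr.le hqr.ne] at h
    simp [lie_eDiag_apply, eI_lie_apply, hpr.ne', hpq.ne',
      apply_eDiag_apply_of_ne hφ hpr.ne' hqr.ne' hpq.ne] at h
    exact eq_zero_of_eq_inv_two_mul h
  have h := congr($(hφ (eDiag K q) (eI K q r hqr.le)) p r)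
  rw [eDiag_lie_eI hqr.le hqr.ne] at h
  simpa [lie_eI_apply, eDiag_lie_apply, hpq.ne', hqr.ne, hqr_entry, two_ne_zero] using h

theorem apply_eDiag_apply_eq_zero_of_not_isMin
    (hφ : IsHalfDerivation K (IncidenceAlgebra K X) φ) {p q : X} (hp : ¬IsMin p)
    (hpq : p < q) : φ (eDiag K q) p q = 0 := by
  obtain ⟨o, hop⟩ := not_isMin_iff.1 hp
  have hoq := hop.trans hpq
  have hop_entry : φ (eI K o p hop.le) o q = 0 := by
    have h := congr($(hφ (eDiag K o) (eI K o p hop.le)) o q)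
    rw [eDiag_lie_eI hop.le hop.ne] at h
    simp [lie_eI_apply, eDiag_lie_apply, hpq.ne, hoq.ne,
      apply_eDiag_apply_of_ne hφ hop.ne hoq.ne hpq.ne] at h
    exact eq_zero_of_eq_inv_two_mul h
  have h := congr($(hφ (eI K o p hop.le) (eDiag K p)) o q)
  rw [eI_lie_eDiag hop.le hop.ne] at h
  simpa [lie_eDiag_apply, eI_lie_apply, hpq.ne, hop.ne', hop_entry, two_ne_zero,
    apply_eDiag_apply_left hφ hpq.ne] using h

theorem isMin_isMax_of_centralPart_apply_ne_zero
    (hφ : IsHalfDerivation K (IncidenceAlgebra K X) φ) {u v : X} (h : centralPart φ u v ≠ 0) :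
    IsMin u ∧ IsMax v := by
  rw [centralPart_apply] at h
  split_ifs at h with huv
  · exact absurd rfl h
  have hlt : u < v := (le_of_ne_zero h).lt_of_ne huv
  exact ⟨not_not.1 fun hu => h (apply_eDiag_apply_eq_zero_of_not_isMin hφ hu hlt),
    not_not.1 fun hv => h (apply_eDiag_apply_eq_zero_of_not_isMax hφ hlt hv)⟩

theorem isDiagI_sub_ad_centralPart_eDiag (hφ : IsHalfDerivation K (IncidenceAlgebra K X) φ)
    (x : X) : IsDiagI ((φ - LieAlgebra.ad K _ (centralPart φ)) (eDiag K x)) := by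
  intro u v huv
  rw [LinearMap.sub_apply, LieAlgebra.ad_apply, sub_apply, lie_eDiag_apply]
  by_cases hxu : x = u
  · subst hxu
    simp [centralPart_apply, huv, apply_eDiag_apply_left hφ huv]
  by_cases hxv : x = v
  · subst hxv
    simp [centralPart_apply, hxu, Ne.symm hxu]
  simp [hxu, hxv, apply_eDiag_apply_of_ne hφ hxu hxv huv]

theorem isDiagI_sub_ad_centralPart [Fintype X]
    (hφ : IsHalfDerivation K (IncidenceAlgebra K X) φ) {f : IncidenceAlgebra K X}
    (hf : IsDiagI f) : IsDiagI ((φ - LieAlgebra.ad K _ (centralPart φ)) f) := by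
  intro u v huv
  rw [eq_sum_smul_eDiag hf, map_sum, sum_apply]
  refine Finset.sum_eq_zero fun x _ => ?_
  rw [map_smul, constSMul_apply, isDiagI_sub_ad_centralPart_eDiag hφ x u v huv, smul_zero]

theorem lie_centralPart_eq_zero [Fintype X] (hφ : IsHalfDerivation K (IncidenceAlgebra K X) φ)
    {f : IncidenceAlgebra K X} (hf : f ∈ derivedSpan K (IncidenceAlgebra K X)) :
    ⁅centralPart φ, f⁆ = 0 :=
  lie_eq_zero_of_isMin_isMax (fun _ _ => isMin_isMax_of_centralPart_apply_ne_zero hφ)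
    (mem_derivedSpan_iff.1 hf)

end IncidenceAlgebra

theorem statement11_general (K X : Type*) [Field K] [CharZero K] [PartialOrder X] [Fintype X]
    [LocallyFiniteOrder X] [DecidableEq X]
    (φ : IncidenceAlgebra K X →ₗ[K] IncidenceAlgebra K X)
    (hφ : IsHalfDerivation K (IncidenceAlgebra K X) φ) :
    ∃! p : IncidenceAlgebra K X × (IncidenceAlgebra K X →ₗ[K] IncidenceAlgebra K X),
      (p.1 ∈ derivedSpan K (IncidenceAlgebra K X) ∧
        ∀ f ∈ derivedSpan K (IncidenceAlgebra K X), ⁅p.1, f⁆ = 0) ∧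
      IsHalfDerivation K (IncidenceAlgebra K X) p.2 ∧
      (∀ f : IncidenceAlgebra K X, IsDiagI f → IsDiagI (p.2 f)) ∧
      (∀ a : IncidenceAlgebra K X, φ a = ⁅p.1, a⁆ + p.2 a) := by
  set c := IncidenceAlgebra.centralPart φ
  have hc : ∀ f ∈ derivedSpan K (IncidenceAlgebra K X), ⁅c, f⁆ = 0 :=
    fun _ => IncidenceAlgebra.lie_centralPart_eq_zero hφ
  refine ⟨(c, φ - LieAlgebra.ad K _ c), ⟨⟨IncidenceAlgebra.centralPart_mem_derivedSpan φ, hc⟩,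
    hφ.sub (isHalfDerivation_ad hc), fun _ => IncidenceAlgebra.isDiagI_sub_ad_centralPart hφ,
    fun a => by simp⟩, ?_⟩
  rintro ⟨d, ψ⟩ ⟨⟨hd, -⟩, -, hψ, hφψ⟩
  obtain rfl : d = c := IncidenceAlgebra.eq_centralPart hd hψ hφψ
  exact Prod.ext rfl (LinearMap.ext fun a => by simp [hφψ a])

/-- every `1/2`-derivation `φ` of `I(X,K)` decomposes uniquely as
`φ = ad_c + φ̃` with `c ∈ Z([I(X,K), I(X,K)])` and `φ̃` a diagonality-preserving
`1/2`-derivation. -/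
theorem statement11 (K X : Type*) [Field K] [CharZero K] [PartialOrder X] [Fintype X]
    [LocallyFiniteOrder X] [DecidableEq X] (hconn : ConnectedPoset X)
    (φ : IncidenceAlgebra K X →ₗ[K] IncidenceAlgebra K X)
    (hφ : IsHalfDerivation K (IncidenceAlgebra K X) φ) :
    ∃! p : IncidenceAlgebra K X × (IncidenceAlgebra K X →ₗ[K] IncidenceAlgebra K X),
      (p.1 ∈ derivedSpan K (IncidenceAlgebra K X) ∧
        ∀ f ∈ derivedSpan K (IncidenceAlgebra K X), ⁅p.1, f⁆ = 0) ∧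
      IsHalfDerivation K (IncidenceAlgebra K X) p.2 ∧
      (∀ f : IncidenceAlgebra K X, IsDiagI f → IsDiagI (p.2 f)) ∧
      (∀ a : IncidenceAlgebra K X, φ a = ⁅p.1, a⁆ + p.2 a) :=
  statement11_general K X φ hφ
end
end
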